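/- arXiv:2007.09538 — 2 statements merged into one kernel-verified Lean document; each statement's English description precedes it below -/
import Mathlib

section
/- Let H₁, H₂ be real Hilbert spaces, r₀ = r₂ = 1, and r₁ a positive integer. Let Ψ₁, Ψ̃₁ be 1 × r₁ row vectors with entries in H₁ and Ψ₂, Ψ̃₂ be r₁ × 1 column vectors with entries in H₂, such that the entries of each Ψᵢ and Ψ̃ᵢ have invertible Gram (auto-correlation) matrices (equivalently, each family of component functions is linearly independent in the appropriate sense). If Σ_{α=1}^{r₁} ψ₁(α) ⊗ ψ₂(α) = Σ_{α=1}^{r₁} ψ̃₁(α) ⊗ ψ̃₂(α) as elements of the Hilbert tensor product H₁ ⊗ H₂, then there exists an invertible r₁ × r₁ real matrix P such that Ψ₁ = Ψ̃₁ P and Ψ₂ = P⁻¹ Ψ̃₂. -/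
open scoped InnerProductSpace TensorProduct
-- `A • v` for a square matrix `A` and a family `v : ι → M` is the family `i ↦ ∑ j, A i j • v j`.
open scoped Matrix.Module
open Matrix

/-!
Contracting `∑ ψ₁ α ⊗ ψ₂ α = ∑ ψ̃₁ α ⊗ ψ̃₂ α` with `⟪ψ₂ β, ·⟫` in the second factor gives
`G₂ Ψ₁ = C Ψ̃₁`, where `G₂` is the Gram matrix of `Ψ₂` and `C` the cross Gram matrix of `Ψ₂, Ψ̃₂`;
hence `Ψ₁ = Ψ̃₁ P` with `Pᵀ = G₂⁻¹ C`. Contracting instead with `⟪ψ̃₁ β, ·⟫` in the first factor and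
substituting this gives `G̃₁ Ψ̃₂ = G̃₁ P Ψ₂`, so `Ψ̃₂ = P Ψ₂`. The Gram matrix of `Ψ̃₂` is then
`P G₂ Pᵀ`, which forces `P` to be invertible, and `Ψ₂ = P⁻¹ Ψ̃₂`.
-/

namespace Matrix

variable {ι : Type*} [Fintype ι] [DecidableEq ι]

lemma eq_nonsing_inv_smul_of_smul_eq {R M : Type*} [CommRing R] [AddCommGroup M] [Module R M]
    {A : Matrix ι ι R} (hA : IsUnit A) {v w : ι → M} (h : A • v = w) : v = A⁻¹ • w := by
  rw [← h, smul_smul, nonsing_inv_mul A ((isUnit_iff_isUnit_det A).mp hA), one_smul]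

lemma isUnit_of_isUnit_mul_mul_transpose {R : Type*} [CommRing R] {A B : Matrix ι ι R}
    (h : IsUnit (A * B * Aᵀ)) : IsUnit A := by
  rw [isUnit_iff_isUnit_det, det_mul, det_mul, det_transpose, mul_right_comm] at h
  rw [isUnit_iff_isUnit_det]
  exact isUnit_of_mul_isUnit_left (isUnit_of_mul_isUnit_left h)

variable {E : Type*} [SeminormedAddCommGroup E] [InnerProductSpace ℝ E]

def crossGram (u v : ι → E) : Matrix ι ι ℝ := of fun i j => ⟪u i, v j⟫_ℝ

lemma crossGram_smul_left (A : Matrix ι ι ℝ) (u v : ι → E) :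
    crossGram (A • u) v = A * crossGram u v := by
  ext i j
  simp [crossGram, mul_apply, sum_inner, real_inner_smul_left]

lemma crossGram_smul_right (A : Matrix ι ι ℝ) (u v : ι → E) :
    crossGram u (A • v) = crossGram u v * Aᵀ := by
  ext i j
  simp [crossGram, mul_apply, inner_sum, real_inner_smul_right, mul_comm]

lemma gram_smul (A : Matrix ι ι ℝ) (v : ι → E) : gram ℝ (A • v) = A * gram ℝ v * Aᵀ := by
  change crossGram (A • v) (A • v) = _
  rw [crossGram_smul_left, crossGram_smul_right, Matrix.mul_assoc]
  rfl

end Matrix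

namespace TensorProduct

variable {ι : Type*} [Fintype ι]

lemma sum_smul_eq_of_sum_tmul_eq {R M N κ : Type*} [CommRing R] [AddCommGroup M] [Module R M]
    [AddCommGroup N] [Module R N] [Fintype κ] {x : ι → M} {y : ι → N} {x' : κ → M} {y' : κ → N}
    (h : ∑ i, x i ⊗ₜ[R] y i = ∑ k, x' k ⊗ₜ[R] y' k) (φ : N →ₗ[R] R) :
    ∑ i, φ (y i) • x i = ∑ k, φ (y' k) • x' k := by
  simpa [map_sum] using congrArg (fun t => TensorProduct.rid R M (φ.lTensor M t)) h

lemma crossGram_smul_eq_of_sum_tmul_eq [DecidableEq ι] {M F : Type*} [AddCommGroup M]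
    [Module ℝ M] [SeminormedAddCommGroup F] [InnerProductSpace ℝ F] {x x' : ι → M} {y y' : ι → F}
    (h : ∑ i, x i ⊗ₜ[ℝ] y i = ∑ i, x' i ⊗ₜ[ℝ] y' i) (w : ι → F) :
    crossGram w y • x = crossGram w y' • x' :=
  funext fun β => sum_smul_eq_of_sum_tmul_eq h (innerₗ F (w β))

end TensorProduct

theorem stmt1_general {H₁ H₂ : Type*}
    [NormedAddCommGroup H₁] [InnerProductSpace ℝ H₁]
    [NormedAddCommGroup H₂] [InnerProductSpace ℝ H₂]
    (r₁ : ℕ)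
    (ψ₁ ψt₁ : Fin r₁ → H₁) (ψ₂ ψt₂ : Fin r₁ → H₂)
    (hGt₁ : IsUnit (Matrix.of fun i j : Fin r₁ => ⟪ψt₁ i, ψt₁ j⟫_ℝ))
    (hG₂ : IsUnit (Matrix.of fun i j : Fin r₁ => ⟪ψ₂ i, ψ₂ j⟫_ℝ))
    (hGt₂ : IsUnit (Matrix.of fun i j : Fin r₁ => ⟪ψt₂ i, ψt₂ j⟫_ℝ))
    (heq : (∑ α, ψ₁ α ⊗ₜ[ℝ] ψ₂ α) = ∑ α, ψt₁ α ⊗ₜ[ℝ] ψt₂ α) :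
    ∃ P : Matrix (Fin r₁) (Fin r₁) ℝ, IsUnit P ∧
      (∀ j, ψ₁ j = ∑ i, P i j • ψt₁ i) ∧
      (∀ i, ψ₂ i = ∑ j, P⁻¹ i j • ψt₂ j) := by
  have heq_comm : ∑ α, ψ₂ α ⊗ₜ[ℝ] ψ₁ α = ∑ α, ψt₂ α ⊗ₜ[ℝ] ψt₁ α := by
    simpa [map_sum] using congrArg (TensorProduct.comm ℝ H₁ H₂) heq
  set P := ((crossGram ψ₂ ψ₂)⁻¹ * crossGram ψ₂ ψt₂)ᵀ
  have hψ₁ : ψ₁ = Pᵀ • ψt₁ := by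
    rw [transpose_transpose, ← smul_smul]
    exact eq_nonsing_inv_smul_of_smul_eq hG₂
      (TensorProduct.crossGram_smul_eq_of_sum_tmul_eq heq ψ₂)
  have hψt₂ : ψt₂ = P • ψ₂ := by
    have h := TensorProduct.crossGram_smul_eq_of_sum_tmul_eq heq_comm ψt₁
    rw [hψ₁, crossGram_smul_right, transpose_transpose, ← smul_smul] at h
    exact (hGt₁.smul_left_cancel.mp h).symm
  have hP : IsUnit P := by
    refine isUnit_of_isUnit_mul_mul_transpose (B := gram ℝ ψ₂) ?_
    rw [← gram_smul, ← hψt₂]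
    exact hGt₂
  exact ⟨P, hP, fun j => congrFun hψ₁ j,
    fun i => congrFun (eq_nonsing_inv_smul_of_smul_eq hP hψt₂.symm) i⟩

/-- uniqueness of rank-`r₁` representations (2D case): if
`Σ_α ψ₁(α) ⊗ ψ₂(α) = Σ_α ψ̃₁(α) ⊗ ψ̃₂(α)` and all four families have invertible Gram
matrices, then there is an invertible `r₁ × r₁` matrix `P` with `Ψ₁ = Ψ̃₁ P` and
`Ψ₂ = P⁻¹ Ψ̃₂`. -/
theorem stmt1 {H₁ H₂ : Type*}
    [NormedAddCommGroup H₁] [InnerProductSpace ℝ H₁] [CompleteSpace H₁]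
    [NormedAddCommGroup H₂] [InnerProductSpace ℝ H₂] [CompleteSpace H₂]
    (r₁ : ℕ) (hr₁ : 0 < r₁)
    (ψ₁ ψt₁ : Fin r₁ → H₁) (ψ₂ ψt₂ : Fin r₁ → H₂)
    (hG₁ : IsUnit (Matrix.of fun i j : Fin r₁ => ⟪ψ₁ i, ψ₁ j⟫_ℝ))
    (hGt₁ : IsUnit (Matrix.of fun i j : Fin r₁ => ⟪ψt₁ i, ψt₁ j⟫_ℝ))
    (hG₂ : IsUnit (Matrix.of fun i j : Fin r₁ => ⟪ψ₂ i, ψ₂ j⟫_ℝ))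
    (hGt₂ : IsUnit (Matrix.of fun i j : Fin r₁ => ⟪ψt₂ i, ψt₂ j⟫_ℝ))
    (heq : (∑ α, ψ₁ α ⊗ₜ[ℝ] ψ₂ α) = ∑ α, ψt₁ α ⊗ₜ[ℝ] ψt₂ α) :
    ∃ P : Matrix (Fin r₁) (Fin r₁) ℝ, IsUnit P ∧
      (∀ j, ψ₁ j = ∑ i, P i j • ψt₁ i) ∧
      (∀ i, ψ₂ i = ∑ j, P⁻¹ i j • ψt₂ j) :=
  stmt1_general r₁ ψ₁ ψt₁ ψ₂ ψt₂ hGt₁ hG₂ hGt₂ heq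
end

section
/- Let H₁, H₂ be separable real Hilbert spaces, u ∈ H₁ ⊗ H₂ with Schmidt decomposition u = Σ_{i=1}^∞ σ_i ψ_i ⊗ φ_i (σ₁ ≥ σ₂ ≥ ... ≥ 0, (ψ_i), (φ_i) orthonormal). Then for every r ≥ 1, the truncation u_r = Σ_{i=1}^r σ_i ψ_i ⊗ φ_i satisfies ‖u − u_r‖² = Σ_{i>r} σ_i², and u_r is a best approximation of u among all elements of H₁ ⊗ H₂ expressible as a sum of at most r elementary tensors: ‖u − u_r‖ ≤ ‖u − v‖ for every v = Σ_{j=1}^r a_j ⊗ b_j with a_j ∈ H₁, b_j ∈ H₂. -/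
open scoped InnerProductSpace InnerProduct
open Finset

/-!
Measure operators by the Hilbert–Schmidt quantity `Σ_j ‖T e_j‖²`. By Tonelli and Parseval it
equals `Σ_i σ_i²` for every `T g = Σ_i σ_i ⟪φ_i, g⟫ ψ_i`; applied to the tail `u - u_r` this gives
the first claim. For optimality, let `q_1, …, q_n` (`n ≤ r`) be an orthonormal basis of the span
of the `a_j`, which contains every `v e_j`. Projecting onto it gives
`Σ_j ‖u e_j - v e_j‖² ≥ Σ_i σ_i² - Σ_k ‖u† q_k‖²`, and `Σ_k ‖u† q_k‖² = Σ_i σ_i² t_i` with weights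
`t_i = Σ_k ⟪ψ_i, q_k⟫² ∈ [0, 1]` (Bessel) of total mass at most `n`. As `σ` is decreasing, such a
weighted sum is at most `Σ_{i<r} σ_i²`.
-/

theorem HasSum.of_nonneg_of_hasSum_fiberwise {β γ : Type*} {f : β → γ → ℝ} {g : β → ℝ}
    {h : γ → ℝ} {a : ℝ} (hf : ∀ b c, 0 ≤ f b c) (hrow : ∀ b, HasSum (f b) (g b))
    (hg : HasSum g a) (hcol : ∀ c, HasSum (fun b => f b c) (h c)) : HasSum h a := by
  have hsum : Summable (Function.uncurry f) :=
    (summable_prod_of_nonneg fun p => hf p.1 p.2).2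
      ⟨fun b => (hrow b).summable, hg.summable.congr fun b => (hrow b).tsum_eq.symm⟩
  have htotal : ∑' p, Function.uncurry f p = a :=
    (hsum.hasSum.prod_fiberwise hrow).unique hg
  rw [← htotal, ← (Equiv.prodComm γ β).tsum_eq]
  exact ((Equiv.prodComm γ β).summable_iff.2 hsum).hasSum.prod_fiberwise hcol

theorem tsum_mul_le_sum_range_of_antitone {s t : ℕ → ℝ} (hs : Antitone s) (hs0 : ∀ i, 0 ≤ s i)
    (ht0 : ∀ i, 0 ≤ t i) (ht1 : ∀ i, t i ≤ 1) (ht : Summable t) {n : ℕ}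
    (htn : ∑' i, t i ≤ n) : ∑' i, s i * t i ≤ ∑ i ∈ range n, s i := by
  set d : ℕ → ℝ := fun i => if i < n then s i - s n else 0
  have hd : HasSum d (∑ i ∈ range n, (s i - s n)) := by
    rw [← sum_congr rfl fun i hi => if_pos (mem_range.1 hi)]
    exact hasSum_sum_of_ne_finset_zero fun i hi => if_neg (mem_range.not.1 hi)
  have hpt : ∀ i, s i * t i ≤ s n * t i + d i := by
    intro i
    by_cases hi : i < n
    · simp only [d, hi, if_true]
      nlinarith [hs hi.le, ht1 i]
    · simp only [d, hi, if_false, add_zero]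
      exact mul_le_mul_of_nonneg_right (hs (not_lt.1 hi)) (ht0 i)
  have hst : Summable fun i => s i * t i :=
    (ht.mul_left (s 0)).of_nonneg_of_le (fun i => mul_nonneg (hs0 i) (ht0 i))
      fun i => mul_le_mul_of_nonneg_right (hs (Nat.zero_le i)) (ht0 i)
  calc ∑' i, s i * t i ≤ ∑' i, (s n * t i + d i) :=
        hst.tsum_le_tsum hpt ((ht.mul_left _).add hd.summable)
    _ = s n * ∑' i, t i + ∑ i ∈ range n, (s i - s n) := by
        rw [((ht.hasSum.mul_left (s n)).add hd).tsum_eq]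
    _ ≤ s n * n + ∑ i ∈ range n, (s i - s n) := by gcongr; exact hs0 n
    _ = ∑ i ∈ range n, s i := by simp [sum_sub_distrib]; ring

theorem memℓp_two_iff_summable_sq {ι E : Type*} [NormedAddCommGroup E] {f : ι → E} :
    Memℓp f 2 ↔ Summable fun i => ‖f i‖ ^ 2 := by
  simpa using memℓp_gen_iff (E := fun _ => E) (p := 2) (f := f) (by norm_num)

section InnerProduct

variable {E : Type*} [NormedAddCommGroup E] [InnerProductSpace ℝ E]

theorem Orthonormal.inner_eq_of_hasSum {ι : Type*} {ψ : ι → E} (hψ : Orthonormal ℝ ψ)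
    {c : ι → ℝ} {x : E} (h : HasSum (fun i => c i • ψ i) x) (j : ι) : ⟪ψ j, x⟫_ℝ = c j := by
  have h' := ((innerSL ℝ (ψ j)).hasSum h).unique
    (hasSum_single j fun i hij => by simp [hψ.2 hij.symm])
  simpa [real_inner_smul_right, real_inner_self_eq_norm_sq, hψ.1 j] using h'

theorem Orthonormal.hasSum_sq_of_hasSum {ι : Type*} {ψ : ι → E} (hψ : Orthonormal ℝ ψ)
    {c : ι → ℝ} {x : E} (h : HasSum (fun i => c i • ψ i) x) :
    HasSum (fun i => c i ^ 2) (‖x‖ ^ 2) := by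
  have hcoeff : (fun i => ⟪x, c i • ψ i⟫_ℝ) = fun i => c i ^ 2 := by
    funext i
    rw [real_inner_smul_right, real_inner_comm, hψ.inner_eq_of_hasSum h, sq]
  simpa only [hcoeff, innerSL_apply_apply, real_inner_self_eq_norm_sq] using
    (innerSL ℝ x).hasSum h

theorem HilbertBasis.hasSum_inner_sq {ι : Type*} (b : HilbertBasis ι ℝ E) (x : E) :
    HasSum (fun j => ⟪x, b j⟫_ℝ ^ 2) (‖x‖ ^ 2) := by
  have h := b.hasSum_inner_mul_inner x x
  rw [real_inner_self_eq_norm_sq] at h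
  simpa only [real_inner_comm x, sq] using h

theorem Orthonormal.norm_sq_sub_sum_inner_sq_le {n : ℕ} {q : Fin n → E} (hq : Orthonormal ℝ q)
    (x : E) {y : E} (hy : y ∈ Submodule.span ℝ (Set.range q)) :
    ‖x‖ ^ 2 - ∑ k, ⟪q k, x⟫_ℝ ^ 2 ≤ ‖x - y‖ ^ 2 := by
  obtain ⟨c, rfl⟩ := (Submodule.mem_span_range_iff_exists_fun ℝ).1 hy
  have hnorm : ‖∑ k, c k • q k‖ ^ 2 = ∑ k, c k ^ 2 := by
    rw [← real_inner_self_eq_norm_sq, hq.inner_sum]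
    simp [sq]
  have hinner : ⟪x, ∑ k, c k • q k⟫_ℝ = ∑ k, c k * ⟪q k, x⟫_ℝ := by
    simp [inner_sum, real_inner_smul_right, real_inner_comm x]
  have hsq : 0 ≤ ∑ k, (c k - ⟪q k, x⟫_ℝ) ^ 2 := sum_nonneg fun k _ => sq_nonneg _
  rw [norm_sub_sq_real, hnorm, hinner]
  simp only [sub_sq, sum_add_distrib, sum_sub_distrib, mul_assoc, ← mul_sum] at hsq
  linarith

theorem exists_orthonormal_span_le {κ : Type*} [Fintype κ] (a : κ → E) :
    ∃ n ≤ Fintype.card κ, ∃ q : Fin n → E, Orthonormal ℝ q ∧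
      Submodule.span ℝ (Set.range a) ≤ Submodule.span ℝ (Set.range q) := by
  set S := Submodule.span ℝ (Set.range a)
  have : FiniteDimensional ℝ S := FiniteDimensional.span_of_finite ℝ (Set.finite_range a)
  let Q := stdOrthonormalBasis ℝ S
  refine ⟨Module.finrank ℝ S, by simpa [Set.finrank, S] using finrank_range_le_card (R := ℝ) a,
    fun k => Q k, Q.orthonormal.comp_linearIsometry S.subtypeₗᵢ, fun y hy => ?_⟩
  rw [← show ((⟨y, hy⟩ : S) : E) = y from rfl, ← Q.sum_repr ⟨y, hy⟩, Submodule.coe_sum]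
  exact sum_mem fun k _ => Submodule.smul_mem _ _ (Submodule.subset_span ⟨k, rfl⟩)

theorem Orthonormal.sum_tsum_mul_inner_sq_le {ψ : ℕ → E} (hψ : Orthonormal ℝ ψ) {n : ℕ}
    {q : Fin n → E} (hq : Orthonormal ℝ q) {s : ℕ → ℝ} (hs : Antitone s) (hs0 : ∀ i, 0 ≤ s i) :
    ∑ k, ∑' i, s i * ⟪ψ i, q k⟫_ℝ ^ 2 ≤ ∑ i ∈ range n, s i := by
  have hbessel : ∀ k, Summable fun i => ⟪ψ i, q k⟫_ℝ ^ 2 := fun k => by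
    simpa only [Real.norm_eq_abs, sq_abs] using hψ.inner_products_summable (q k)
  have hweighted : ∀ k, Summable fun i => s i * ⟪ψ i, q k⟫_ℝ ^ 2 := fun k =>
    ((hbessel k).mul_left (s 0)).of_nonneg_of_le (fun i => mul_nonneg (hs0 i) (sq_nonneg _))
      fun i => mul_le_mul_of_nonneg_right (hs (Nat.zero_le i)) (sq_nonneg _)
  have hle_one : ∀ i, ∑ k, ⟪ψ i, q k⟫_ℝ ^ 2 ≤ 1 := fun i => by
    simpa only [Real.norm_eq_abs, sq_abs, real_inner_comm (ψ i), hψ.1 i, one_pow] using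
      hq.sum_inner_products_le (ψ i) (s := univ)
  have hle_n : ∑' i, ∑ k, ⟪ψ i, q k⟫_ℝ ^ 2 ≤ n := by
    rw [Summable.tsum_finsetSum fun k _ => hbessel k]
    calc ∑ k, ∑' i, ⟪ψ i, q k⟫_ℝ ^ 2 ≤ ∑ _k : Fin n, (1 : ℝ) := sum_le_sum fun k _ => by
          simpa only [Real.norm_eq_abs, sq_abs, hq.1 k, one_pow] using
            hψ.tsum_inner_products_le (q k)
      _ = n := by simp
  rw [← Summable.tsum_finsetSum fun k _ => hweighted k]
  simp only [← mul_sum]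
  exact tsum_mul_le_sum_range_of_antitone hs hs0 (fun i => sum_nonneg fun k _ => sq_nonneg _)
    hle_one (summable_sum fun k _ => hbessel k) hle_n

end InnerProduct

section Schmidt

variable {H₁ H₂ : Type*} [NormedAddCommGroup H₁] [InnerProductSpace ℝ H₁]
  [NormedAddCommGroup H₂] [InnerProductSpace ℝ H₂]

theorem hasSum_norm_sq_apply_of_hasSum_schmidt {ι κ : Type*} (e : HilbertBasis ι ℝ H₂)
    {σ : κ → ℝ} {ψ : κ → H₁} {φ : κ → H₂} (hψ : Orthonormal ℝ ψ) (hφ : Orthonormal ℝ φ)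
    (hσ : Summable fun i => σ i ^ 2) {T : H₂ → H₁}
    (hT : ∀ g, HasSum (fun i => (σ i * ⟪φ i, g⟫_ℝ) • ψ i) (T g)) :
    HasSum (fun j => ‖T (e j)‖ ^ 2) (∑' i, σ i ^ 2) := by
  refine HasSum.of_nonneg_of_hasSum_fiberwise (f := fun i j => (σ i * ⟪φ i, e j⟫_ℝ) ^ 2)
    (fun _ _ => sq_nonneg _) (fun i => ?_) hσ.hasSum fun j => hψ.hasSum_sq_of_hasSum (hT (e j))
  simpa only [hφ.1 i, one_pow, mul_one, mul_pow] using
    (e.hasSum_inner_sq (φ i)).mul_left (σ i ^ 2)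

theorem apply_eq_smul_of_hasSum_schmidt {κ : Type*} {σ : κ → ℝ} {ψ : κ → H₁} {φ : κ → H₂}
    (hφ : Orthonormal ℝ φ) {T : H₂ → H₁}
    (hT : ∀ g, HasSum (fun i => (σ i * ⟪φ i, g⟫_ℝ) • ψ i) (T g)) (i : κ) :
    T (φ i) = σ i • ψ i := by
  have h := (hT (φ i)).unique (hasSum_single i fun l hl => by simp [hφ.2 hl])
  simpa [real_inner_self_eq_norm_sq, hφ.1 i] using h

theorem HilbertBasis.memℓp_two_sum_inner_smul {ι κ : Type*} [Fintype κ]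
    (e : HilbertBasis ι ℝ H₂) (a : κ → H₁) (b : κ → H₂) :
    Memℓp (fun j => ∑ k, ⟪b k, e j⟫_ℝ • a k) 2 := by
  refine Memℓp.finsetSum _ fun k _ => memℓp_two_iff_summable_sq.2 ?_
  simpa only [norm_smul, mul_pow, Real.norm_eq_abs, sq_abs] using
    (e.hasSum_inner_sq (b k)).summable.mul_right (‖a k‖ ^ 2)

variable [CompleteSpace H₁] [CompleteSpace H₂]

theorem HilbertBasis.hasSum_inner_apply_sq {ι : Type*} (e : HilbertBasis ι ℝ H₂)
    (u : H₂ →L[ℝ] H₁) (x : H₁) :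
    HasSum (fun j => ⟪x, u (e j)⟫_ℝ ^ 2) (‖(u†) x‖ ^ 2) := by
  simpa only [ContinuousLinearMap.adjoint_inner_left] using e.hasSum_inner_sq ((u†) x)

theorem hasSum_norm_adjoint_apply_sq_of_hasSum_schmidt {κ : Type*} {σ : κ → ℝ} {ψ : κ → H₁}
    {φ : κ → H₂} (hφ : Orthonormal ℝ φ) {u : H₂ →L[ℝ] H₁}
    (hu : ∀ g, HasSum (fun i => (σ i * ⟪φ i, g⟫_ℝ) • ψ i) (u g)) (x : H₁) :
    HasSum (fun i => σ i ^ 2 * ⟪ψ i, x⟫_ℝ ^ 2) (‖(u†) x‖ ^ 2) := by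
  set y := (u†) x
  have hcoeff : ∀ i, ⟪φ i, y⟫_ℝ = σ i * ⟪ψ i, x⟫_ℝ := fun i => by
    rw [ContinuousLinearMap.adjoint_inner_right, apply_eq_smul_of_hasSum_schmidt hφ hu,
      real_inner_smul_left]
  have h := (innerSL ℝ x).hasSum (hu y)
  rw [innerSL_apply_apply, ← ContinuousLinearMap.adjoint_inner_left,
    real_inner_self_eq_norm_sq] at h
  have hterm : ∀ i, innerSL ℝ x ((σ i * ⟪φ i, y⟫_ℝ) • ψ i) = σ i ^ 2 * ⟪ψ i, x⟫_ℝ ^ 2 :=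
    fun i => by
    rw [innerSL_apply_apply, real_inner_smul_right, hcoeff, real_inner_comm x]
    ring
  simpa only [hterm] using h

theorem sum_norm_adjoint_apply_sq_le_of_hasSum_schmidt {σ : ℕ → ℝ} {ψ : ℕ → H₁} {φ : ℕ → H₂}
    (hσ : Antitone σ) (hσ0 : ∀ i, 0 ≤ σ i) (hψ : Orthonormal ℝ ψ) (hφ : Orthonormal ℝ φ)
    {u : H₂ →L[ℝ] H₁} (hu : ∀ g, HasSum (fun i => (σ i * ⟪φ i, g⟫_ℝ) • ψ i) (u g))
    {n : ℕ} {q : Fin n → H₁} (hq : Orthonormal ℝ q) :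
    ∑ k, ‖(u†) (q k)‖ ^ 2 ≤ ∑ i ∈ range n, σ i ^ 2 := by
  simp only [← (hasSum_norm_adjoint_apply_sq_of_hasSum_schmidt hφ hu _).tsum_eq]
  exact hψ.sum_tsum_mul_inner_sq_le hq (fun i j hij => pow_le_pow_left₀ (hσ0 j) (hσ hij) 2)
    fun i => sq_nonneg _

theorem tsum_sq_nat_add_le_of_hasSum_schmidt (e : HilbertBasis ℕ ℝ H₂) {σ : ℕ → ℝ}
    {ψ : ℕ → H₁} {φ : ℕ → H₂} (hσ : Antitone σ) (hσ0 : ∀ i, 0 ≤ σ i)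
    (hσ_sq : Summable fun i => σ i ^ 2) (hψ : Orthonormal ℝ ψ) (hφ : Orthonormal ℝ φ)
    {u : H₂ →L[ℝ] H₁} (hu : ∀ g, HasSum (fun i => (σ i * ⟪φ i, g⟫_ℝ) • ψ i) (u g)) {r : ℕ}
    (a : Fin r → H₁) (b : Fin r → H₂) :
    ∑' i, σ (i + r) ^ 2 ≤ ∑' j, ‖u (e j) - ∑ k, ⟪b k, e j⟫_ℝ • a k‖ ^ 2 := by
  obtain ⟨n, hnr, q, hq, hspan⟩ := exists_orthonormal_span_le a
  have hU := hasSum_norm_sq_apply_of_hasSum_schmidt e hψ hφ hσ_sq hu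
  have hP : HasSum (fun j => ∑ k, ⟪q k, u (e j)⟫_ℝ ^ 2) (∑ k, ‖(u†) (q k)‖ ^ 2) :=
    hasSum_sum fun k _ => e.hasSum_inner_apply_sq u (q k)
  have hKyFan : ∑ k, ‖(u†) (q k)‖ ^ 2 ≤ ∑ i ∈ range r, σ i ^ 2 :=
    (sum_norm_adjoint_apply_sq_le_of_hasSum_schmidt hσ hσ0 hψ hφ hu hq).trans
      (sum_le_sum_of_subset_of_nonneg (range_subset_range.2 (by simpa using hnr))
        fun i _ _ => sq_nonneg _)
  have hproj : ∀ j, ‖u (e j)‖ ^ 2 - ∑ k, ⟪q k, u (e j)⟫_ℝ ^ 2 ≤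
      ‖u (e j) - ∑ k, ⟪b k, e j⟫_ℝ • a k‖ ^ 2 :=
    fun j => hq.norm_sq_sub_sum_inner_sq_le _ <| hspan <|
      sum_mem fun k _ => Submodule.smul_mem _ _ (Submodule.subset_span ⟨k, rfl⟩)
  have hsummable : Summable fun j => ‖u (e j) - ∑ k, ⟪b k, e j⟫_ℝ • a k‖ ^ 2 :=
    memℓp_two_iff_summable_sq.1 <|
      (memℓp_two_iff_summable_sq.2 hU.summable).sub (e.memℓp_two_sum_inner_smul a b)
  calc ∑' i, σ (i + r) ^ 2 = ∑' i, σ i ^ 2 - ∑ i ∈ range r, σ i ^ 2 := by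
        rw [← hσ_sq.sum_add_tsum_nat_add r, add_sub_cancel_left]
    _ ≤ ∑' i, σ i ^ 2 - ∑ k, ‖(u†) (q k)‖ ^ 2 := by linarith
    _ = ∑' j, (‖u (e j)‖ ^ 2 - ∑ k, ⟪q k, u (e j)⟫_ℝ ^ 2) := (hU.sub hP).tsum_eq.symm
    _ ≤ _ := (hU.sub hP).summable.tsum_le_tsum hproj hsummable

end Schmidt

theorem stmt10_general {H₁ H₂ : Type*}
    [NormedAddCommGroup H₁] [InnerProductSpace ℝ H₁] [CompleteSpace H₁]
    [NormedAddCommGroup H₂] [InnerProductSpace ℝ H₂] [CompleteSpace H₂]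
    (e : HilbertBasis ℕ ℝ H₂)
    (u : H₂ →L[ℝ] H₁)
    (σ : ℕ → ℝ) (ψ : ℕ → H₁) (φ : ℕ → H₂)
    (hσ_mono : Antitone σ) (hσ_nonneg : ∀ i, 0 ≤ σ i)
    (hσ_sq : Summable fun i => σ i ^ 2)
    (hψ : Orthonormal ℝ ψ) (hφ : Orthonormal ℝ φ)
    (hu : ∀ g : H₂, HasSum (fun i => (σ i * ⟪φ i, g⟫_ℝ) • ψ i) (u g))
    (r : ℕ)
    (ur : H₂ →L[ℝ] H₁)
    (hur : ∀ g : H₂, ur g = ∑ i ∈ Finset.range r, (σ i * ⟪φ i, g⟫_ℝ) • ψ i) :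
    (∑' j, ‖u (e j) - ur (e j)‖ ^ 2) = (∑' i, σ (i + r) ^ 2) ∧
    ∀ (a : Fin r → H₁) (b : Fin r → H₂) (v : H₂ →L[ℝ] H₁),
      (∀ g : H₂, v g = ∑ j, ⟪b j, g⟫_ℝ • a j) →
      (∑' j, ‖u (e j) - ur (e j)‖ ^ 2) ≤ ∑' j, ‖u (e j) - v (e j)‖ ^ 2 := by
  have hshift : Function.Injective fun i => i + r := add_left_injective r
  have htail : HasSum (fun j => ‖u (e j) - ur (e j)‖ ^ 2) (∑' i, σ (i + r) ^ 2) :=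
    hasSum_norm_sq_apply_of_hasSum_schmidt (T := fun g => u g - ur g) e (hψ.comp _ hshift)
      (hφ.comp _ hshift) ((summable_nat_add_iff r).2 hσ_sq) fun g => by
        rw [hur]
        exact (hasSum_nat_add_iff' r).2 (hu g)
  refine ⟨htail.tsum_eq, fun a b v hv => ?_⟩
  rw [htail.tsum_eq]
  simpa only [hv] using
    tsum_sq_nat_add_le_of_hasSum_schmidt e hσ_mono hσ_nonneg hσ_sq hψ hφ hu a b

/-- Eckart–Young in infinite dimensions: identifying `H₁ ⊗ H₂` with the
Hilbert–Schmidt operators `H₂ → H₁` (the Hilbert–Schmidt norm squared is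
`Σ_j ‖·(e j)‖²` for a Hilbert basis `e` of `H₂`), if `u = Σ σ_i ψ_i ⊗ φ_i` is a Schmidt
decomposition, then the truncation `u_r = Σ_{i<r} σ_i ψ_i ⊗ φ_i` satisfies
`‖u − u_r‖² = Σ_{i≥r} σ_i²` and is a best approximation of `u` among all sums of at
most `r` elementary tensors `Σ_{j<r} a_j ⊗ b_j`. -/
theorem stmt10 {H₁ H₂ : Type*}
    [NormedAddCommGroup H₁] [InnerProductSpace ℝ H₁] [CompleteSpace H₁]
    [TopologicalSpace.SeparableSpace H₁]
    [NormedAddCommGroup H₂] [InnerProductSpace ℝ H₂] [CompleteSpace H₂]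
    (e : HilbertBasis ℕ ℝ H₂)
    (u : H₂ →L[ℝ] H₁) (hHS : Summable fun i => ‖u (e i)‖ ^ 2)
    (σ : ℕ → ℝ) (ψ : ℕ → H₁) (φ : ℕ → H₂)
    (hσ_mono : Antitone σ) (hσ_nonneg : ∀ i, 0 ≤ σ i)
    (hσ_sq : Summable fun i => σ i ^ 2)
    (hψ : Orthonormal ℝ ψ) (hφ : Orthonormal ℝ φ)
    (hu : ∀ g : H₂, HasSum (fun i => (σ i * ⟪φ i, g⟫_ℝ) • ψ i) (u g))
    (r : ℕ)
    (ur : H₂ →L[ℝ] H₁)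
    (hur : ∀ g : H₂, ur g = ∑ i ∈ Finset.range r, (σ i * ⟪φ i, g⟫_ℝ) • ψ i) :
    (∑' j, ‖u (e j) - ur (e j)‖ ^ 2) = (∑' i, σ (i + r) ^ 2) ∧
    ∀ (a : Fin r → H₁) (b : Fin r → H₂) (v : H₂ →L[ℝ] H₁),
      (∀ g : H₂, v g = ∑ j, ⟪b j, g⟫_ℝ • a j) →
      (∑' j, ‖u (e j) - ur (e j)‖ ^ 2) ≤ ∑' j, ‖u (e j) - v (e j)‖ ^ 2 :=
  stmt10_general e u σ ψ φ hσ_mono hσ_nonneg hσ_sq hψ hφ hu r ur hur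
end
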